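/- arXiv:2601.22126 — 2 statements merged into one kernel-verified Lean document; each statement's English description precedes it below -/
import Mathlib

section
/- Let V be a nontrivial finite-dimensional real inner product space, let H be a symmetric bilinear form on V, and let A : V → V be a linear map. Write λ_min(H) := min over unit vectors v of H(v,v), σ_min(A) := min over unit vectors v of ‖Av‖, and let A*H denote the bilinear form (v,w) ↦ H(Av, Aw). If λ_min(H) < 0, then σ_min(A)² · λ_min(H) ≥ λ_min(A*H). -/
/-- **Pullback Spectral Bound.** Let `V` be a nontrivial finite-dimensional real inner
product space, `H` a symmetric bilinear form on `V`, and `A : V → V` linear. With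
`λ_min(H) := inf over unit vectors v of H(v,v)`, `σ_min(A) := inf over unit vectors v of ‖Av‖`,
and `A*H` the bilinear form `(v,w) ↦ H(Av, Aw)`, if `λ_min(H) < 0` then
`σ_min(A)² · λ_min(H) ≥ λ_min(A*H)`. -/
theorem pullback_spectral_bound {V : Type*} [NormedAddCommGroup V] [InnerProductSpace ℝ V]
    [FiniteDimensional ℝ V] [Nontrivial V]
    (H : V →ₗ[ℝ] V →ₗ[ℝ] ℝ) (hH : ∀ v w, H v w = H w v) (A : V →ₗ[ℝ] V)
    (hneg : sInf ((fun v => H v v) '' {v : V | ‖v‖ = 1}) < 0) :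
    (sInf ((fun v => ‖A v‖) '' {v : V | ‖v‖ = 1})) ^ 2 *
        sInf ((fun v => H v v) '' {v : V | ‖v‖ = 1}) ≥
      sInf ((fun v => H (A v) (A v)) '' {v : V | ‖v‖ = 1}) := by
  classical
  set S : Set V := {v : V | ‖v‖ = 1} with hS
  have hSs : S = Metric.sphere (0 : V) 1 := by
    ext v; simp [hS, Metric.mem_sphere, dist_zero_right]
  have hScomp : IsCompact S := hSs ▸ isCompact_sphere 0 1
  obtain ⟨v₀, hv₀⟩ := exists_ne (0 : V)
  have hSne : S.Nonempty :=
    ⟨‖v₀‖⁻¹ • v₀, by simp [hS, norm_smul, inv_mul_cancel₀ (norm_ne_zero_iff.mpr hv₀)]⟩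
  -- continuity of v ↦ H v v
  have hE : Continuous fun v : V => H v v := by
    set E : V →ₗ[ℝ] (V →L[ℝ] ℝ) :=
      (LinearMap.toContinuousLinearMap : (V →ₗ[ℝ] ℝ) ≃ₗ[ℝ] (V →L[ℝ] ℝ)).toLinearMap ∘ₗ H
      with hEdef
    have hEc : Continuous E := E.continuous_of_finiteDimensional
    have h2 : Continuous fun v : V => (E v) v :=
      isBoundedBilinearMap_apply.continuous.comp (hEc.prodMk continuous_id)
    have : ∀ v : V, (E v) v = H v v := fun v => rfl
    simpa [this] using h2
  have hA : Continuous A := A.continuous_of_finiteDimensional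
  -- bounds on μ := sInf of H(Av,Av)
  have hUcomp : IsCompact ((fun v => H (A v) (A v)) '' S) := by
    have : Continuous fun v : V => H (A v) (A v) := hE.comp hA
    exact hScomp.image this
  have hμ_le : ∀ v ∈ S, sInf ((fun v => H (A v) (A v)) '' S) ≤ H (A v) (A v) :=
    fun v hv => csInf_le hUcomp.bddBelow ⟨v, hv, rfl⟩
  -- σ facts
  have hTbdd : BddBelow ((fun v => ‖A v‖) '' S) :=
    ⟨0, by rintro t ⟨v, hv, rfl⟩; exact norm_nonneg _⟩
  have hσ_nonneg : 0 ≤ sInf ((fun v => ‖A v‖) '' S) :=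
    le_csInf (hSne.image _) (by rintro t ⟨v, hv, rfl⟩; exact norm_nonneg _)
  have hσ_le : ∀ v ∈ S, sInf ((fun v => ‖A v‖) '' S) ≤ ‖A v‖ :=
    fun v hv => csInf_le hTbdd ⟨v, hv, rfl⟩
  set σ := sInf ((fun v => ‖A v‖) '' S) with hσ
  set lam := sInf ((fun v => H v v) '' S) with hlam
  by_cases hinj : Function.Injective A
  · -- A is bijective; minimizer of H exists by compactness
    obtain ⟨w, hwS, hww⟩ := (hScomp.image hE).sInf_mem (hSne.image _)
    have hwnorm : ‖w‖ = 1 := hwS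
    have hlamval : H w w = lam := hww
    obtain ⟨x, hx⟩ := (LinearMap.injective_iff_surjective (f := A)).mp hinj w
    have hw0 : w ≠ 0 := by
      intro h; rw [h] at hwnorm; simp at hwnorm
    have hx0 : x ≠ 0 := by
      rintro rfl; exact hw0 (by simpa using hx.symm)
    set c : ℝ := ‖x‖⁻¹ with hc
    have hcpos : 0 < c := inv_pos.mpr (norm_pos_iff.mpr hx0)
    have hvS : c • x ∈ S := by
      simp [hS, norm_smul, hc, abs_of_pos hcpos,
        inv_mul_cancel₀ (norm_ne_zero_iff.mpr hx0)]
    have hAv : A (c • x) = c • w := by rw [map_smul, hx]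
    have hHval : H (A (c • x)) (A (c • x)) = c ^ 2 * lam := by
      rw [hAv]
      simp only [map_smul, LinearMap.smul_apply, smul_eq_mul]
      rw [← hlamval]; ring
    have hnormAv : ‖A (c • x)‖ = c := by
      rw [hAv, norm_smul, hwnorm, Real.norm_eq_abs, abs_of_pos hcpos, mul_one]
    have hσle : σ ≤ c := hnormAv ▸ hσ_le _ hvS
    have hσ2 : σ ^ 2 ≤ c ^ 2 := by nlinarith
    have hμle : sInf ((fun v => H (A v) (A v)) '' S) ≤ c ^ 2 * lam := by
      rw [← hHval]; exact hμ_le _ hvS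
    have hlamneg : lam < 0 := hneg
    nlinarith
  · -- A has nontrivial kernel: σ = 0 and μ ≤ 0
    rw [← LinearMap.ker_eq_bot] at hinj
    obtain ⟨x, hxker, hx0⟩ := Submodule.exists_mem_ne_zero_of_ne_bot hinj
    have hAx : A x = 0 := hxker
    set c : ℝ := ‖x‖⁻¹ with hc
    have hcpos : 0 < c := inv_pos.mpr (norm_pos_iff.mpr hx0)
    have hvS : c • x ∈ S := by
      simp [hS, norm_smul, hc, abs_of_pos hcpos,
        inv_mul_cancel₀ (norm_ne_zero_iff.mpr hx0)]
    have hAv : A (c • x) = 0 := by rw [map_smul, hAx, smul_zero]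
    have hσ0 : σ = 0 := le_antisymm (by simpa [hAv] using hσ_le _ hvS) hσ_nonneg
    have hμ0 : sInf ((fun v => H (A v) (A v)) '' S) ≤ 0 := by
      have := hμ_le _ hvS
      simpa [hAv] using this
    rw [hσ0]
    simpa using hμ0
end

section
/- Let p ≥ 2 be a natural number, let α > 0 and g ≥ 0 be real numbers, and let μ_2, …, μ_p be nonnegative real numbers. Suppose t ≥ 0 is a real number satisfying (α/(p+1)) · t^{p+1} ≤ g·t + Σ_{j=2}^{p} (μ_j / j!) · t^{j}. Then t ≤ 2 · max{ max_{1 ≤ k ≤ p−1} ((p+1) · μ_{p−k+1} / (α · (p−k+1)!))^{1/k}, ((p+1) · g / (2α))^{1/p} }. -/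
/-!
Divide the inequality by `(α / (p + 1)) t` to get `t ^ p ≤ a₁ t ^ (p - 1) + ⋯ + a_{p-1} t + b`,
which is Fujiwara's setting. If `t > 2R` where `a_k ≤ R ^ k` and `b ≤ 2 R ^ p`, then
`a_k t ^ (p - k) < t ^ p / 2 ^ k` and `b < 2 t ^ p / 2 ^ p`, and these weights sum to exactly
`1 = ∑_{k < p} 2⁻ᵏ + 2 · 2⁻ᵖ`, contradicting the inequality.
-/

open Finset

theorem sum_Ico_one_half_pow_add_two_mul (n : ℕ) (hn : 1 ≤ n) :
    ∑ k ∈ Ico 1 n, (1 / 2 : ℝ) ^ k + 2 * (1 / 2) ^ n = 1 := by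
  rw [geom_sum_Ico (by norm_num) hn]
  ring

theorem div_two_pow_mul_pow_sub (x : ℝ) {k n : ℕ} (hkn : k ≤ n) :
    (x / 2) ^ k * x ^ (n - k) = x ^ n * (1 / 2) ^ k := by
  rw [← pow_mul_pow_sub x hkn]
  ring

theorem le_two_mul_of_pow_le_sum {n : ℕ} (hn : 1 ≤ n) {a : ℕ → ℝ} {b R x : ℝ} (hR : 0 ≤ R)
    (ha : ∀ k ∈ Ico 1 n, a k ≤ R ^ k) (hb : b ≤ 2 * R ^ n)
    (h : x ^ n ≤ ∑ k ∈ Ico 1 n, a k * x ^ (n - k) + b) :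
    x ≤ 2 * R := by
  by_contra! hx
  have hRx : R < x / 2 := by linarith
  have hsum : ∑ k ∈ Ico 1 n, a k * x ^ (n - k) ≤ ∑ k ∈ Ico 1 n, x ^ n * (1 / 2) ^ k := by
    refine sum_le_sum fun k hk => ?_
    rw [← div_two_pow_mul_pow_sub x (mem_Ico.mp hk).2.le]
    gcongr
    · exact pow_nonneg (by linarith) _
    · exact (ha k hk).trans (pow_le_pow_left₀ hR hRx.le k)
  have hlast : b < 2 * (x ^ n * (1 / 2) ^ n) := by
    calc b ≤ 2 * R ^ n := hb
      _ < 2 * (x / 2) ^ n := by gcongr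
      _ = 2 * (x ^ n * (1 / 2) ^ n) := by ring
  refine lt_irrefl (x ^ n) ?_
  calc x ^ n ≤ ∑ k ∈ Ico 1 n, a k * x ^ (n - k) + b := h
    _ < x ^ n * (∑ k ∈ Ico 1 n, (1 / 2) ^ k + 2 * (1 / 2) ^ n) := by
      rw [mul_add, mul_sum]; linarith
    _ = x ^ n := by rw [sum_Ico_one_half_pow_add_two_mul n hn, mul_one]

theorem le_pow_of_rpow_one_div_le {y R : ℝ} {k : ℕ} (hy : 0 ≤ y) (hk : k ≠ 0)
    (h : y ^ ((1 : ℝ) / k) ≤ R) : y ≤ R ^ k := by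
  rw [one_div] at h
  rw [← Real.rpow_inv_natCast_pow hy hk]
  exact pow_le_pow_left₀ (Real.rpow_nonneg hy _) h k

theorem sum_Icc_two_eq_sum_Ico_one_reflect {M : Type*} [AddCommMonoid M] (p : ℕ) (f : ℕ → M) :
    ∑ j ∈ Icc 2 p, f j = ∑ k ∈ Ico 1 p, f (p - k + 1) := by
  refine sum_nbij' (fun j => p - j + 1) (fun k => p - k + 1) ?_ ?_ ?_ ?_ ?_ <;>
    intro i hi <;> simp only [mem_Icc, mem_Ico] at hi ⊢
  all_goals first | omega | rw [show p - (p - i + 1) + 1 = i by omega]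

theorem pow_le_sum_of_model_decrease (p : ℕ) {α g t : ℝ} (μ : ℕ → ℝ) (hα : 0 < α) (ht : 0 < t)
    (hineq : α / ((p : ℝ) + 1) * t ^ (p + 1) ≤
      g * t + ∑ j ∈ Icc 2 p, μ j / (j.factorial : ℝ) * t ^ j) :
    t ^ p ≤ ∑ k ∈ Ico 1 p, ((p : ℝ) + 1) * μ (p - k + 1) / (α * ((p - k + 1).factorial : ℝ)) *
      t ^ (p - k) + ((p : ℝ) + 1) * g / α := by
  have hterm : ∀ k ∈ Ico 1 p, α / ((p : ℝ) + 1) * t *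
      (((p : ℝ) + 1) * μ (p - k + 1) / (α * ((p - k + 1).factorial : ℝ)) * t ^ (p - k)) =
        μ (p - k + 1) / ((p - k + 1).factorial : ℝ) * t ^ (p - k + 1) := by
    intro k _
    rw [pow_succ]
    field_simp
  rw [sum_Icc_two_eq_sum_Ico_one_reflect, ← sum_congr rfl hterm, ← mul_sum] at hineq
  refine le_of_mul_le_mul_left (a := α / ((p : ℝ) + 1) * t) ?_ (by positivity)
  calc α / ((p : ℝ) + 1) * t * t ^ p = α / ((p : ℝ) + 1) * t ^ (p + 1) := by ring
    _ ≤ _ := hineq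
    _ = _ := by
      rw [mul_add, add_comm]
      congr 1
      field_simp

/-- **Fujiwara-type root bound.** Let `p ≥ 2`, `α > 0`, `g ≥ 0`, and `μ_2,…,μ_p ≥ 0`.
If `t ≥ 0` satisfies `(α/(p+1)) t^{p+1} ≤ g·t + Σ_{j=2}^{p} (μ_j/j!) t^j`, then
`t ≤ 2 · max{ max_{1≤k≤p−1} ((p+1)μ_{p−k+1}/(α(p−k+1)!))^{1/k}, ((p+1)g/(2α))^{1/p} }`. -/
theorem fujiwara_type_root_bound (p : ℕ) (hp : 2 ≤ p) (α g : ℝ) (hα : 0 < α)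
    (hg : 0 ≤ g) (μ : ℕ → ℝ) (hμ : ∀ j, 2 ≤ j → j ≤ p → 0 ≤ μ j)
    (t : ℝ) (ht : 0 ≤ t)
    (hineq : α / ((p : ℝ) + 1) * t ^ (p + 1) ≤
      g * t + ∑ j ∈ Finset.Icc 2 p, μ j / (j.factorial : ℝ) * t ^ j) :
    t ≤ 2 * max
        ((Finset.Icc 1 (p - 1)).sup' (Finset.nonempty_Icc.mpr (by omega))
          (fun k => (((p : ℝ) + 1) * μ (p - k + 1) /
              (α * ((p - k + 1).factorial : ℝ))) ^ ((1 : ℝ) / (k : ℝ))))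
        ((((p : ℝ) + 1) * g / (2 * α)) ^ ((1 : ℝ) / (p : ℝ))) := by
  set a : ℕ → ℝ := fun k => ((p : ℝ) + 1) * μ (p - k + 1) / (α * ((p - k + 1).factorial : ℝ))
  set A := (Icc 1 (p - 1)).sup' (nonempty_Icc.mpr (by omega)) fun k => a k ^ ((1 : ℝ) / k)
  set B := (((p : ℝ) + 1) * g / (2 * α)) ^ ((1 : ℝ) / p)
  have hR : 0 ≤ max A B := le_max_of_le_right (Real.rpow_nonneg (by positivity) _)
  rcases ht.eq_or_lt with rfl | htpos
  · positivity
  refine le_two_mul_of_pow_le_sum (n := p) (a := a) (b := ((p : ℝ) + 1) * g / α)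
    (by omega) hR (fun k hk => ?_) ?_ ?_
  · obtain ⟨hk1, hkp⟩ := mem_Ico.mp hk
    have hk' : k ∈ Icc 1 (p - 1) := mem_Icc.mpr ⟨hk1, by omega⟩
    have hμk := hμ (p - k + 1) (by omega) (by omega)
    exact le_pow_of_rpow_one_div_le (by positivity) (by omega)
      ((le_sup' _ hk').trans (le_max_left A B))
  · have := le_pow_of_rpow_one_div_le (k := p) (by positivity) (by omega) (le_max_right A B)
    calc ((p : ℝ) + 1) * g / α = 2 * (((p : ℝ) + 1) * g / (2 * α)) := by field_simp
      _ ≤ 2 * max A B ^ p := by gcongr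
  · exact pow_le_sum_of_model_decrease p μ hα htpos hineq
end
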